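/- (Categorical Krull–Remak–Schmidt) Let C_i (i ∈ Γ) and D_j (j ∈ Λ) be connected triangulated R-linear categories, and suppose Φ : ⊕_{i ∈ Γ} C_i → ⊕_{j ∈ Λ} D_j is an equivalence of triangulated categories. Then there is a bijection π : Γ → Λ such that C_i is triangle equivalent to D_{π(i)} for all i ∈ Γ. -/

import Mathlib

/-!
Fix a summand `S i`. Transporting the splitting `D = T j ⊕ (T j)^⊥` along `Φ` splits `S i` into
two mutually orthogonal triangulated subcategories, one of which vanishes by connectedness.
Choosing `j` so that `Φ` of some nonzero object of `S i` has a nonzero component in `T j`, the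
vanishing one must be the second, so `Φ` maps `S i` into `T j =: T (π i)`. The same argument for
`Φ⁻¹` gives `σ` with `Φ⁻¹ (T j) ⊆ S (σ j)`. A nonzero object lies in only one summand, so `σ` and
`π` are mutually inverse, and every object of `T (π i)` is `Φ` of its image in `S (σ (π i)) = S i`.
-/

open CategoryTheory Limits Pretriangulated Triangulated ZeroObject

universe v u

namespace CategoryTheory.Triangulated

variable (C : Type u) [Category.{v} C] [HasZeroObject C] [HasShift C ℤ] [Preadditive C]
  [∀ n : ℤ, (shiftFunctor C n).Additive] [Pretriangulated C]

/-- The former Mathlib structure of triangulated subcategories (removed upstream). -/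
structure Subcategory where
  P : C → Prop
  zero' : ∃ (Z : C) (_ : IsZero Z), P Z
  shift (X : C) (n : ℤ) : P X → P (X⟦n⟧)
  ext₂' (T : Triangle C) (_ : T ∈ distTriang C) : P T.obj₁ → P T.obj₃ →
    ObjectProperty.isoClosure P T.obj₂

end CategoryTheory.Triangulated

section Defs

variable {E : Type u} [Category.{v} E] [HasZeroObject E] [HasShift E ℤ] [Preadditive E]
  [∀ n : ℤ, (shiftFunctor E n).Additive] [Pretriangulated E]

/-- The iterated binary biproduct of a list of objects. -/
noncomputable def sumList : List E → E
  | [] => 0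
  | X :: l => X ⊞ sumList l

/-- A triangulated subcategory is thick if it is closed under direct summands. -/
def IsThick (S : Triangulated.Subcategory E) : Prop :=
  ∀ (X Y Z : E), Nonempty (Z ≅ X ⊞ Y) → S.P Z → S.P X

/-- There are no nonzero morphisms from objects satisfying `P` to objects satisfying `Q`. -/
def HomOrth (P Q : E → Prop) : Prop :=
  ∀ ⦃X Y : E⦄ (f : X ⟶ Y), P X → Q Y → f = 0

/-- The class of objects `P` (e.g. the objects of a triangulated subcategory, or the whole
category via `P = fun _ => True`) is connected: it contains a nonzero object, and for any two
triangulated subcategories `S₁, S₂` contained in `P`, with no morphisms between them in either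
direction, such that every object satisfying `P` decomposes as a direct sum of an object of
`S₁` and an object of `S₂`, one of `S₁`, `S₂` consists of zero objects only. -/
def IsConnectedP (P : E → Prop) : Prop :=
  (∃ X : E, P X ∧ ¬ IsZero X) ∧
  ∀ S₁ S₂ : Triangulated.Subcategory E,
    (∀ X, S₁.P X → P X) → (∀ X, S₂.P X → P X) →
    HomOrth S₁.P S₂.P → HomOrth S₂.P S₁.P →
    (∀ X, P X → ∃ X₁ X₂, S₁.P X₁ ∧ S₂.P X₂ ∧ Nonempty (X ≅ X₁ ⊞ X₂)) →
    (∀ X, S₁.P X → IsZero X) ∨ (∀ X, S₂.P X → IsZero X)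

/-- The family of triangulated subcategories `S j` realizes the ambient category as the
direct sum `⊕_j S j`: each `S j` is closed under isomorphisms, there are no nonzero morphisms
between distinct summands, and every object is a finite direct sum of objects of the `S j`. -/
def IsDirectSumDecomp {ι : Type*} (S : ι → Triangulated.Subcategory E) : Prop :=
  (∀ i, ObjectProperty.IsClosedUnderIsomorphisms (S i).P) ∧
  (∀ i j, i ≠ j → HomOrth (S i).P (S j).P) ∧
  (∀ X : E, ∃ l : List E, (∀ Y ∈ l, ∃ i, (S i).P Y) ∧ Nonempty (X ≅ sumList l))

/-- An object is indecomposable if it is nonzero and in any direct sum decomposition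
one of the summands is zero. -/
def Indec (X : E) : Prop :=
  ¬ IsZero X ∧ ∀ (Y Z : E), Nonempty (X ≅ Y ⊞ Z) → IsZero Y ∨ IsZero Z

/-- A Krull–Remak–Schmidt triangulated category: every object is a finite direct sum of
objects with local endomorphism rings. -/
def IsKrullSchmidtCat : Prop :=
  ∀ X : E, ∃ l : List E, (∀ Y ∈ l, IsLocalRing (End Y)) ∧ Nonempty (X ≅ sumList l)

/-- `thickClosure X` is the class of objects of the smallest thick subcategory
containing `X`. -/
def thickClosure (X Y : E) : Prop :=
  ∀ S : Triangulated.Subcategory E, IsThick S → S.P X → S.P Y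

end Defs

namespace CategoryTheory

namespace Triangulated.Subcategory

variable {E : Type u} [Category.{v} E] [HasZeroObject E] [HasShift E ℤ] [Preadditive E]
  [∀ n : ℤ, (shiftFunctor E n).Additive] [Pretriangulated E]

instance (S : Subcategory E) : ObjectProperty.IsTriangulated S.P where
  exists_zero := let ⟨Z, hZ, h⟩ := S.zero'; ⟨Z, hZ, h⟩
  isStableUnderShiftBy n := ⟨fun X h => S.shift X n h⟩
  ext₂' := S.ext₂'

def ofIsTriangulated (P : ObjectProperty E) [P.IsTriangulated] : Subcategory E where
  P := P
  zero' := let ⟨Z, hZ, h⟩ := P.exists_prop_of_containsZero; ⟨Z, hZ, h⟩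
  shift X n := P.le_shift n X
  ext₂' := P.ext_of_isTriangulatedClosed₂'

end Triangulated.Subcategory

lemma Retract.isZero_of_r_eq_zero {E : Type*} [Category E] [HasZeroMorphisms E] {X Y : E}
    (h : Retract X Y) (hr : h.r = 0) : IsZero X :=
  (IsZero.iff_id_eq_zero X).2 (by rw [← h.retract, hr, comp_zero])

namespace ObjectProperty

section Orthogonal

variable {E : Type*} [Category E] [Preadditive E]

abbrev orthogonal (P : ObjectProperty E) : ObjectProperty E :=
  P.leftOrthogonal ⊓ P.rightOrthogonal

lemma homOrth_orthogonal (P : ObjectProperty E) : HomOrth P P.orthogonal :=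
  fun _ _ f hX hY => hY.2 f hX

lemma homOrth_orthogonal_left (P : ObjectProperty E) : HomOrth P.orthogonal P :=
  fun _ _ f hX hY => hX.1 f hY

end Orthogonal

variable {E : Type u} [Category.{v} E] [HasZeroObject E] [HasShift E ℤ] [Preadditive E]
  [∀ n : ℤ, (shiftFunctor E n).Additive] [Pretriangulated E]

lemma prop_biprod_of_isTriangulated (P : ObjectProperty E) [P.IsTriangulated]
    [P.IsClosedUnderIsomorphisms] {X₁ X₂ : E} (h₁ : P X₁) (h₂ : P X₂) : P (X₁ ⊞ X₂) :=
  P.ext_of_isTriangulatedClosed₂ _ (binaryBiproductTriangle_distinguished X₁ X₂) h₁ h₂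

end ObjectProperty

section Equivalence

variable {C D : Type*} [Category C] [Category D] [Preadditive C] [Preadditive D]
  [HasBinaryBiproducts C] [HasBinaryBiproducts D]

lemma Equivalence.exists_iso_biprod_inf_inverseImage (Φ : C ≌ D) {P : ObjectProperty C}
    [P.IsStableUnderRetracts] {Q₁ Q₂ : ObjectProperty D}
    [Q₁.IsClosedUnderIsomorphisms] [Q₂.IsClosedUnderIsomorphisms]
    (hQ : ∀ Y, ∃ Y₁ Y₂, Q₁ Y₁ ∧ Q₂ Y₂ ∧ Nonempty (Y ≅ Y₁ ⊞ Y₂)) {X : C} (hX : P X) :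
    ∃ X₁ X₂, (P ⊓ Q₁.inverseImage Φ.functor) X₁ ∧ (P ⊓ Q₂.inverseImage Φ.functor) X₂ ∧
      Nonempty (X ≅ X₁ ⊞ X₂) := by
  have := preservesBinaryBiproducts_of_preservesBinaryProducts Φ.inverse
  obtain ⟨Y₁, Y₂, h₁, h₂, ⟨e⟩⟩ := hQ (Φ.functor.obj X)
  let e' : X ≅ Φ.inverse.obj Y₁ ⊞ Φ.inverse.obj Y₂ :=
    Φ.unitIso.app X ≪≫ Φ.inverse.mapIso e ≪≫ Φ.inverse.mapBiprod Y₁ Y₂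
  refine ⟨_, _, ⟨?_, ?_⟩, ⟨?_, ?_⟩, ⟨e'⟩⟩
  · exact P.prop_of_retract ((BinaryBiproduct.bicone _ _).retract_left.trans e'.symm.retract) hX
  · exact Q₁.prop_of_iso (Φ.counitIso.app Y₁).symm h₁
  · exact P.prop_of_retract ((BinaryBiproduct.bicone _ _).retract_right.trans e'.symm.retract) hX
  · exact Q₂.prop_of_iso (Φ.counitIso.app Y₂).symm h₂

end Equivalence

end CategoryTheory

section SumList

variable {E : Type u} [Category.{v} E] [HasZeroObject E] [HasShift E ℤ] [Preadditive E]
  [∀ n : ℤ, (shiftFunctor E n).Additive] [Pretriangulated E]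

lemma isZero_sumList : ∀ l : List E, (∀ Y ∈ l, IsZero Y) → IsZero (sumList l)
  | [], _ => isZero_zero E
  | X :: l, h => (biprod_isZero_iff _ _).2
      ⟨h X List.mem_cons_self, isZero_sumList l fun Y hY => h Y (List.mem_cons_of_mem X hY)⟩

lemma nonempty_retract_sumList {l : List E} {Y : E} (hY : Y ∈ l) :
    Nonempty (Retract Y (sumList l)) := by
  induction hY with
  | head l => exact ⟨(BinaryBiproduct.bicone _ _).retract_left⟩
  | tail X _ ih => exact ⟨ih.some.trans (BinaryBiproduct.bicone _ _).retract_right⟩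

end SumList

namespace IsDirectSumDecomp

variable {E : Type u} [Category.{v} E] [HasZeroObject E] [HasShift E ℤ] [Preadditive E]
  [∀ n : ℤ, (shiftFunctor E n).Additive] [Pretriangulated E]
  {ι : Type*} {S : ι → Triangulated.Subcategory E} (hS : IsDirectSumDecomp S)
include hS

open ObjectProperty

lemma eq_of_prop {i k : ι} {X : E} (hi : (S i).P X) (hk : (S k).P X) (hX : ¬ IsZero X) :
    i = k := by
  by_contra hik
  exact hX ((IsZero.iff_id_eq_zero X).2 (hS.2.1 i k hik _ hi hk))

lemma orthogonal_of_ne {i k : ι} (hik : i ≠ k) {X : E} (hX : (S k).P X) :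
    orthogonal (S i).P X :=
  ⟨fun _ f hY => hS.2.1 k i (Ne.symm hik) f hX hY, fun _ f hY => hS.2.1 i k hik f hY hX⟩

lemma exists_not_orthogonal {X : E} (hX : ¬ IsZero X) : ∃ i, ¬ orthogonal (S i).P X := by
  by_contra! h
  obtain ⟨l, hl, ⟨e⟩⟩ := hS.2.2 X
  refine hX (e.isZero_iff.2 (isZero_sumList l fun Y hY => ?_))
  obtain ⟨i, hi⟩ := hl Y hY
  obtain ⟨r⟩ := nonempty_retract_sumList hY
  let r' : Retract Y X := r.trans e.symm.retract
  exact r'.isZero_of_r_eq_zero ((h i).1 r'.r hi)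

lemma exists_iso_biprod (i : ι) (X : E) :
    ∃ A B, (S i).P A ∧ orthogonal (S i).P B ∧ Nonempty (X ≅ A ⊞ B) := by
  have := hS.1 i
  obtain ⟨l, hl, ⟨e⟩⟩ := hS.2.2 X
  suffices ∀ l : List E, (∀ Y ∈ l, ∃ k, (S k).P Y) →
      ∃ A B, (S i).P A ∧ orthogonal (S i).P B ∧ Nonempty (sumList l ≅ A ⊞ B) by
    obtain ⟨A, B, hA, hB, ⟨e'⟩⟩ := this l hl
    exact ⟨A, B, hA, hB, ⟨e ≪≫ e'⟩⟩
  intro l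
  induction l with
  | nil =>
    exact fun _ => ⟨0, 0, prop_zero (S i).P, (orthogonal (S i).P).prop_zero,
      ⟨(isZero_zero E).iso ((biprod_isZero_iff _ _).2 ⟨isZero_zero E, isZero_zero E⟩)⟩⟩
  | cons X l ih =>
    intro h
    obtain ⟨A, B, hA, hB, ⟨e⟩⟩ := ih fun Y hY => h Y (List.mem_cons_of_mem X hY)
    obtain ⟨k, hk⟩ := h X List.mem_cons_self
    by_cases hki : k = i
    · subst hki
      exact ⟨X ⊞ A, B, prop_biprod_of_isTriangulated (S k).P hk hA, hB,
        ⟨biprod.mapIso (Iso.refl X) e ≪≫ (biprod.associator X A B).symm⟩⟩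
    · exact ⟨A, X ⊞ B, hA,
        (orthogonal (S i).P).prop_biprod_of_isTriangulated
          (hS.orthogonal_of_ne (Ne.symm hki) hk) hB,
        ⟨biprod.mapIso (Iso.refl X) e ≪≫ (biprod.associator X A B).symm ≪≫
          biprod.mapIso (biprod.braiding X A) (Iso.refl B) ≪≫ biprod.associator A X B⟩⟩

lemma isStableUnderRetracts (i : ι) : IsStableUnderRetracts (S i).P where
  of_retract {A X} r hX := by
    have := hS.1 i
    obtain ⟨A₁, A₂, h₁, h₂, ⟨e⟩⟩ := hS.exists_iso_biprod i A
    let r₂ : Retract A₂ X :=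
      ((BinaryBiproduct.bicone A₁ A₂).retract_right.trans e.symm.retract).trans r
    have hA₂ : IsZero A₂ := r₂.isZero_of_r_eq_zero (h₂.2 r₂.r hX)
    exact prop_of_iso (S i).P e.symm
      (prop_biprod_of_isTriangulated (S i).P h₁ (prop_of_isZero (S i).P hA₂))

end IsDirectSumDecomp

section KrullRemakSchmidt

open ObjectProperty

variable {C : Type u} [Category.{v} C] [HasZeroObject C] [HasShift C ℤ] [Preadditive C]
  [∀ n : ℤ, (shiftFunctor C n).Additive] [Pretriangulated C]
  {D : Type u} [Category.{v} D] [HasZeroObject D] [HasShift D ℤ] [Preadditive D]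
  [∀ n : ℤ, (shiftFunctor D n).Additive] [Pretriangulated D]

lemma IsDirectSumDecomp.exists_forall_prop_functor_obj {Λ : Type*}
    {T : Λ → Triangulated.Subcategory D} (hT : IsDirectSumDecomp T) (Φ : C ≌ D)
    [Φ.functor.CommShift ℤ] [Φ.functor.IsTriangulated] {P : ObjectProperty C} [P.IsTriangulated]
    [P.IsStableUnderRetracts] (hP : IsConnectedP P) :
    ∃ j, ∀ X, P X → (T j).P (Φ.functor.obj X) := by
  obtain ⟨⟨X₀, hX₀, hX₀nz⟩, hconn⟩ := hP
  obtain ⟨j, hj⟩ := hT.exists_not_orthogonal (X := Φ.functor.obj X₀)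
    (fun h => hX₀nz ((Φ.inverse.map_isZero h).of_iso (Φ.unitIso.app X₀)))
  have := hT.1 j
  let P₁ := P ⊓ inverseImage (T j).P Φ.functor
  let P₂ := P ⊓ (orthogonal (T j).P).inverseImage Φ.functor
  have hsplit : ∀ X, P X → ∃ X₁ X₂, P₁ X₁ ∧ P₂ X₂ ∧ Nonempty (X ≅ X₁ ⊞ X₂) :=
    fun X hX => Φ.exists_iso_biprod_inf_inverseImage (hT.exists_iso_biprod j) hX
  have h₁₂ : HomOrth P₁ P₂ := fun _ _ f h₁ h₂ =>
    Φ.functor.map_eq_zero_iff.1 (homOrth_orthogonal (T j).P _ h₁.2 h₂.2)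
  have h₂₁ : HomOrth P₂ P₁ := fun _ _ f h₂ h₁ =>
    Φ.functor.map_eq_zero_iff.1 (homOrth_orthogonal_left (T j).P _ h₂.2 h₁.2)
  refine ⟨j, ?_⟩
  rcases hconn (.ofIsTriangulated P₁) (.ofIsTriangulated P₂) (fun _ h => h.1) (fun _ h => h.1)
    h₁₂ h₂₁ hsplit with hP₁ | hP₂
  · obtain ⟨X₁, X₂, hX₁, hX₂, ⟨e⟩⟩ := hsplit X₀ hX₀
    exact absurd (P₂.prop_of_iso e.symm
      (P₂.prop_biprod_of_isTriangulated (P₂.prop_of_isZero (hP₁ X₁ hX₁)) hX₂)).2 hj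
  · intro X hX
    obtain ⟨X₁, X₂, hX₁, hX₂, ⟨e⟩⟩ := hsplit X hX
    exact (P₁.prop_of_iso e.symm
      (P₁.prop_biprod_of_isTriangulated hX₁ (P₁.prop_of_isZero (hP₂ X₂ hX₂)))).2

lemma IsDirectSumDecomp.leftInverse {Γ Λ : Type*} {S : Γ → Triangulated.Subcategory C}
    {T : Λ → Triangulated.Subcategory D} (hS : IsDirectSumDecomp S)
    (hS₀ : ∀ i, ∃ X, (S i).P X ∧ ¬ IsZero X) (Φ : C ≌ D) {π : Γ → Λ} {σ : Λ → Γ}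
    (hπ : ∀ i X, (S i).P X → (T (π i)).P (Φ.functor.obj X))
    (hσ : ∀ j Y, (T j).P Y → (S (σ j)).P (Φ.inverse.obj Y)) :
    Function.LeftInverse σ π := fun i =>
  let ⟨X, hX, hXnz⟩ := hS₀ i
  have := hS.1 (σ (π i))
  hS.eq_of_prop (prop_of_iso (S _).P (Φ.unitIso.app X).symm (hσ _ _ (hπ i X hX))) hX hXnz

end KrullRemakSchmidt

theorem stmt4 {R : Type*} [CommRing R]
    {C : Type u} [Category.{v} C] [HasZeroObject C] [HasShift C ℤ] [Preadditive C]
    [∀ n : ℤ, (shiftFunctor C n).Additive] [Pretriangulated C] [Linear R C]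
    {D : Type u} [Category.{v} D] [HasZeroObject D] [HasShift D ℤ] [Preadditive D]
    [∀ n : ℤ, (shiftFunctor D n).Additive] [Pretriangulated D] [Linear R D]
    {Γ Λ : Type*} (S : Γ → Triangulated.Subcategory C) (T : Λ → Triangulated.Subcategory D)
    (hS : IsDirectSumDecomp S) (hT : IsDirectSumDecomp T)
    (hSconn : ∀ i, IsConnectedP (S i).P) (hTconn : ∀ j, IsConnectedP (T j).P)
    (Φ : C ≌ D) [Φ.functor.CommShift ℤ] [Φ.functor.IsTriangulated] [Φ.functor.Linear R] :
    ∃ π : Γ → Λ, Function.Bijective π ∧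
      (∀ (i : Γ) (X : C), (S i).P X → (T (π i)).P (Φ.functor.obj X)) ∧
      (∀ (i : Γ) (Y : D), (T (π i)).P Y →
        ∃ X : C, (S i).P X ∧ Nonempty (Φ.functor.obj X ≅ Y)) := by
  let := Φ.commShiftInverse ℤ
  have := Φ.commShift_of_functor ℤ
  have : Φ.IsTriangulated := .mk' Φ inferInstance
  have hπ : ∀ i, ∃ j, ∀ X, (S i).P X → (T j).P (Φ.functor.obj X) := fun i =>
    have := hS.isStableUnderRetracts i
    hT.exists_forall_prop_functor_obj Φ (hSconn i)
  have hσ : ∀ j, ∃ i, ∀ Y, (T j).P Y → (S i).P (Φ.inverse.obj Y) := fun j =>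
    have := hT.isStableUnderRetracts j
    hS.exists_forall_prop_functor_obj Φ.symm (hTconn j)
  choose π hπ using hπ
  choose σ hσ using hσ
  have hσπ := hS.leftInverse (fun i => (hSconn i).1) Φ hπ hσ
  have hπσ := hT.leftInverse (fun j => (hTconn j).1) Φ.symm hσ hπ
  exact ⟨π, ⟨hσπ.injective, hπσ.surjective⟩, hπ,
    fun i Y hY => ⟨Φ.inverse.obj Y, hσπ i ▸ hσ _ Y hY, ⟨Φ.counitIso.app Y⟩⟩⟩
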